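/- Let k ≤ n and μ, μ' ∈ ℂ˟. If z ∈ Cl_N(q,c) is nonzero and satisfies z γ_k = μ γ_k z and z γ_{k'} = μ' γ_{k'} z, then z is homogeneous of degree 0 with respect to the grading ∂_k (i.e., in each monomial of z, γ_k and γ_{k'} occur equally often). -/

import Mathlib

noncomputable section

namespace FRT

/-- The "dual" index `i' = N+1-i` (0-indexed: `N-1-i`). -/
def dual {N : ℕ} (i : Fin N) : Fin N := ⟨N - 1 - i.val, by have := i.2; omega⟩

/-- Generators of the free algebra. -/
def gen {N : ℕ} (i : Fin N) : FreeAlgebra ℂ (Fin N) := FreeAlgebra.ι ℂ i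

/-- The sum `∑_{k<i} q^{2k-2i+2} γ_k γ_{k'}` appearing in the defining relations. -/
def pairSum (N : ℕ) (q : ℂ) (i : Fin N) : FreeAlgebra ℂ (Fin N) :=
  ∑ k ∈ Finset.Iio i, (q ^ (2 * (k.val : ℤ) - 2 * (i.val : ℤ) + 2)) • (gen k * gen (dual k))

/-- The defining relations of the FRT–Clifford algebra `Cl_N(q,c)`. -/
inductive Rel (N : ℕ) (q c : ℂ) : FreeAlgebra ℂ (Fin N) → FreeAlgebra ℂ (Fin N) → Prop
  | sq (i : Fin N) (h : 2 * i.val + 1 ≠ N) : Rel N q c (gen i * gen i) 0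
  | swap (i j : Fin N) (hlt : i < j) (h : i.val + j.val + 1 ≠ N) :
      Rel N q c (gen j * gen i) ((-(q ^ 2)) • (gen i * gen j))
  | pair (i : Fin N) (h : 2 * i.val + 1 < N) :
      Rel N q c (gen (dual i) * gen i)
        (-(gen i * gen (dual i)) + (q ^ 2 - q⁻¹ ^ 2) • pairSum N q i +
          algebraMap ℂ _ (c ^ 2 * q ^ ((N : ℤ) - 2 * (i.val : ℤ) - 1) * (q + q⁻¹)))
  | middle (i : Fin N) (h : 2 * i.val + 1 = N) :
      Rel N q c (gen i * gen i) ((q - q⁻¹) • pairSum N q i + algebraMap ℂ _ (c ^ 2))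

/-- The FRT–Clifford algebra `Cl_N(q,c)`. -/
abbrev Cl (N : ℕ) (q c : ℂ) := RingQuot (Rel N q c)

/-- The generators `γ_i` of `Cl_N(q,c)`. -/
def γ (N : ℕ) (q c : ℂ) (i : Fin N) : Cl N q c :=
  RingQuot.mkAlgHom ℂ (Rel N q c) (gen i)

/-- Ordered product `γ_1 γ_2 ⋯ γ_m` of the first `m` generators. -/
def prodFirst (N : ℕ) (q c : ℂ) (m : ℕ) : Cl N q c :=
  (((List.finRange N).take m).map (γ N q c)).prod

/-- Ordered product `γ_{m+1} γ_{m+2} ⋯ γ_N` (0-indexed: indices `m,…,N-1`). -/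
def prodFrom (N : ℕ) (q c : ℂ) (m : ℕ) : Cl N q c :=
  (((List.finRange N).drop m).map (γ N q c)).prod

/-- The ordered monomial `γ_1^{i_1} ⋯ γ_N^{i_N}` for `i ∈ {0,1}^N`. -/
def monoB (N : ℕ) (q c : ℂ) (f : Fin N → Bool) : Cl N q c :=
  ((List.finRange N).map (fun i => if f i then γ N q c i else 1)).prod

/-- The ordered monomial `γ_1^{i_1} ⋯ γ_n^{i_n}` for `i ∈ {0,1}^n`, `n ≤ N`. -/
def monoLow (N : ℕ) (q c : ℂ) {n : ℕ} (h : n ≤ N) (f : Fin n → Bool) : Cl N q c :=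
  ((List.finRange n).map (fun j => if f j then γ N q c (Fin.castLE h j) else 1)).prod

/-- `z` is homogeneous of `∂_i`-degree `0`: it is fixed by every algebra endomorphism
rescaling `γ_i` by `t` and `γ_{i'}` by `t⁻¹`. -/
def DegZeroAt (N : ℕ) (q c : ℂ) (i : ℕ) (z : Cl N q c) : Prop :=
  ∀ t : ℂ, t ≠ 0 → ∀ f : Cl N q c →ₐ[ℂ] Cl N q c,
    (∀ j : Fin N, f (γ N q c j) =
      (if j.val = i then t else if j.val + i + 1 = N then t⁻¹ else 1) • γ N q c j) →
    f z = z

/-!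
Rescaling `γ_k` by `t` and `γ_{k'}` by `t⁻¹` defines an algebra endomorphism `σ_t`, and the words
in the generators split `Cl_N(q,c)` into the spans `H_d` of words of `∂_k`-degree `d`, on which
`σ_t` acts by `t ^ d`. Applying all the `σ_t` to `z γ_k = μ γ_k z` shows that every component
`z_d` of `z` satisfies the same relation, and likewise for `γ_{k'}`.

Since `γ_k² = 0` and `γ_k` skew-commutes with every generator but `γ_{k'}`, a word with more
letters `γ_k` than `γ_{k'}` is killed by `γ_k` from the left. So for `d > 0`,
`(γ_k γ_{k'} + γ_{k'} γ_k) z_d = μ'⁻¹ γ_k z_d γ_{k'} = 0`, and symmetrically for `d < 0`.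
The anticommutator `D_k = γ_k γ_{k'} + γ_{k'} γ_k` is invertible: `D_0` is a nonzero scalar
(`c ≠ 0`, `q² ≠ -1`) and `D_{l+1} = q⁻² D_l + (q² - q⁻²) e_l`, where `e_l = γ_l γ_{l'}` commutes
with `D_l` and `e_l² = D_l e_l`, so that `e_l D_l⁻¹` is idempotent. Hence `z = z_0`.
-/

end FRT

section Algebra

variable {K : Type*} [Field K]

lemma two_zpow_injective [CharZero K] : Function.Injective fun d : ℤ => (2 : K) ^ d := by
  intro a b hab
  have h : (((2 : ℚ) ^ a : ℚ) : K) = (((2 : ℚ) ^ b : ℚ) : K) := by push_cast; exact hab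
  exact zpow_right_injective₀ (by norm_num) (by norm_num) (Rat.cast_injective h)

/-- Comparing the relation at `t` and at `2t` eliminates one exponent. -/
lemma eq_zero_of_forall_sum_zpow_smul_eq_zero [CharZero K] {M : Type*} [AddCommGroup M]
    [Module K M] (s : Finset ℤ) (v : ℤ → M) (h : ∀ t : K, t ≠ 0 → ∑ d ∈ s, t ^ d • v d = 0) :
    ∀ d ∈ s, v d = 0 := by
  classical
  induction s using Finset.induction_on generalizing v with
  | empty => simp
  | @insert a s ha ih =>
    have hs : ∀ d ∈ s, v d = 0 := by
      intro d hd
      have hv := ih (fun d => ((2 : K) ^ d - 2 ^ a) • v d) (fun t ht => ?_) d hd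
      · refine (smul_eq_zero.mp hv).resolve_left (sub_ne_zero.mpr fun h2 => ha ?_)
        rwa [← two_zpow_injective h2]
      have h2t := h (2 * t) (mul_ne_zero two_ne_zero ht)
      have ht' := h t ht
      rw [Finset.sum_insert ha] at h2t ht'
      calc ∑ d ∈ s, t ^ d • ((2 : K) ^ d - 2 ^ a) • v d
          = (∑ d ∈ s, (2 * t) ^ d • v d) - (2 : K) ^ a • ∑ d ∈ s, t ^ d • v d := by
            simp only [Finset.smul_sum, ← Finset.sum_sub_distrib, smul_smul, ← sub_smul, mul_zpow]
            congr! 2; ring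
        _ = 0 := by
            rw [eq_neg_of_add_eq_zero_right h2t, eq_neg_of_add_eq_zero_right ht', mul_zpow,
              smul_neg, smul_smul]
            abel
    intro d hd
    rcases Finset.mem_insert.mp hd with rfl | hd
    · have h1 := h 1 one_ne_zero
      rwa [Finset.sum_insert ha, Finset.sum_eq_zero fun e he => by rw [hs e he, smul_zero],
        add_zero, one_zpow, one_smul] at h1
    · exact hs d hd

variable {A : Type*} [Ring A] [Algebra K A]

lemma IsIdempotentElem.smul_one_add_smul_mul {y : A} (hy : IsIdempotentElem y) (u v u' v' : K) :
    (u • (1 : A) + v • y) * (u' • 1 + v' • y) = (u * u') • 1 + (u * v' + v * u' + v * v') • y := by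
  simp only [add_mul, mul_add, smul_mul_smul, one_mul, mul_one, hy.eq, add_smul]
  abel

lemma IsIdempotentElem.isUnit_smul_one_add_smul {y : A} (hy : IsIdempotentElem y) {α β : K}
    (hα : α ≠ 0) (hαβ : α + β ≠ 0) : IsUnit (α • (1 : A) + β • y) := by
  have h : ∀ u v : K, u = 1 → v = 0 → u • (1 : A) + v • y = 1 := by rintro _ _ rfl rfl; simp
  refine ⟨⟨_, α⁻¹ • 1 + ((α + β)⁻¹ - α⁻¹) • y, ?_, ?_⟩, rfl⟩ <;>
    rw [hy.smul_one_add_smul_mul] <;> exact h _ _ (by field_simp) (by field_simp; ring)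

/-- The idempotent `a d⁻¹` writes `α d + β a` as `(α + β a d⁻¹) d`. -/
lemma isUnit_smul_add_smul_of_mul_self {d a : A} (hd : IsUnit d) (had : Commute a d)
    (haa : a * a = d * a) {α β : K} (hα : α ≠ 0) (hαβ : α + β ≠ 0) : IsUnit (α • d + β • a) := by
  obtain ⟨d, rfl⟩ := hd
  have hy : IsIdempotentElem (a * ↑d⁻¹) :=
    calc a * ↑d⁻¹ * (a * ↑d⁻¹) = a * a * ↑d⁻¹ * ↑d⁻¹ := by
          rw [mul_assoc a, ← mul_assoc _ a, ← had.units_inv_right.eq]; simp only [mul_assoc]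
      _ = a * ↑d⁻¹ := by rw [haa, ← had.eq, Units.mul_inv_cancel_right]
  have h : α • (d : A) + β • a = (α • 1 + β • (a * ↑d⁻¹)) * d := by
    rw [add_mul, smul_mul_assoc, smul_mul_assoc, one_mul, mul_assoc, Units.inv_mul, mul_one]
  rw [h]
  exact (hy.isUnit_smul_one_add_smul hα hαβ).mul d.isUnit

lemma eq_zero_of_isUnit_mul_add_mul {a b x : A} (hab : IsUnit (a * b + b * a)) (hax : a * x = 0)
    {μ : K} (hμ : μ ≠ 0) (hxb : x * b = μ • (b * x)) : x = 0 := by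
  have hbx : b * x = μ⁻¹ • (x * b) := by rw [hxb, inv_smul_smul₀ hμ]
  refine (hab.mul_right_eq_zero).mp ?_
  rw [add_mul, mul_assoc, mul_assoc, hax, hbx, mul_smul_comm, ← mul_assoc, hax]
  simp

end Algebra

section Words

variable {ι K R : Type*} [CommSemiring K] [Semiring R] [Algebra K R]

lemma AlgHom.map_prod_map_of_apply_eq_smul (f : R →ₐ[K] R) {g : ι → R} {s : ι → K}
    (hf : ∀ j, f (g j) = s j • g j) (L : List ι) :
    f (L.map g).prod = (L.map s).prod • (L.map g).prod := by
  induction L with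
  | nil => simp
  | cons j L ih =>
    simp only [List.map_cons, List.prod_cons, map_mul, hf, ih, smul_mul_smul]

lemma mul_prod_map_eq_zero_of_count_lt [DecidableEq ι] (g : ι → R) {a b : ι}
    (hsq : g a * g a = 0) (hcomm : ∀ j, j ≠ a → j ≠ b → ∃ u : K, g a * g j = u • (g j * g a))
    (L : List ι) (hL : L.count b < L.count a) : g a * (L.map g).prod = 0 := by
  suffices ∀ L : List ι, (L.count b < L.count a → g a * (L.map g).prod = 0) ∧
      (L.count b + 2 ≤ L.count a → (L.map g).prod = 0) from (this L).1 hL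
  clear hL
  intro L
  induction L with
  | nil => simp
  | cons j L ih =>
    simp only [List.map_cons, List.prod_cons]
    by_cases hja : j = a
    · subst hja
      rw [List.count_cons_self]
      by_cases hjb : j = b
      · subst hjb; simp
      rw [List.count_cons_of_ne hjb]
      refine ⟨fun _ => by rw [← mul_assoc, hsq, zero_mul], fun h => ?_⟩
      rw [ih.1 (by omega)]
    rw [List.count_cons_of_ne hja]
    by_cases hjb : j = b
    · subst hjb
      rw [List.count_cons_self]
      refine ⟨fun h => ?_, fun h => ?_⟩ <;> simp [ih.2 (by omega)]
    rw [List.count_cons_of_ne hjb]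
    obtain ⟨u, hu⟩ := hcomm j hja hjb
    refine ⟨fun h => ?_, fun h => by rw [ih.2 h, mul_zero]⟩
    rw [← mul_assoc, hu, smul_mul_assoc, mul_assoc, ih.1 h, mul_zero, smul_zero]

end Words

namespace FRT

section Relations

variable {N : ℕ} {q c : ℂ}

lemma dual_val (i : Fin N) : (dual i).val = N - 1 - i.val := rfl

lemma dual_dual (i : Fin N) : dual (dual i) = i := by
  ext; simp only [dual_val]; omega

lemma dual_eq_self (i : Fin N) (h : 2 * i.val + 1 = N) : dual i = i := by
  ext; simp only [dual_val]; omega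

lemma dual_ne_self {i : Fin N} (h : 2 * i.val + 1 ≠ N) : dual i ≠ i := by
  have := i.2
  rw [Ne, Fin.ext_iff, dual_val]; omega

variable (N q c) in
def clPairSum (i : Fin N) : Cl N q c :=
  ∑ l ∈ Finset.Iio i, (q ^ (2 * (l.val : ℤ) - 2 * (i.val : ℤ) + 2)) • (γ N q c l * γ N q c (dual l))

lemma map_pairSum (f : FreeAlgebra ℂ (Fin N) →ₐ[ℂ] Cl N q c)
    (hf : ∀ l, f (gen l * gen (dual l)) = γ N q c l * γ N q c (dual l)) (i : Fin N) :
    f (pairSum N q i) = clPairSum N q c i := by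
  simp only [pairSum, clPairSum, map_sum, map_smul, hf]

lemma mkAlgHom_gen_mul_gen (i j : Fin N) :
    RingQuot.mkAlgHom ℂ (Rel N q c) (gen i * gen j) = γ N q c i * γ N q c j :=
  map_mul _ _ _

lemma γ_mul_self (i : Fin N) (h : 2 * i.val + 1 ≠ N) : γ N q c i * γ N q c i = 0 := by
  simpa [mkAlgHom_gen_mul_gen] using RingQuot.mkAlgHom_rel ℂ (Rel.sq (q := q) (c := c) i h)

lemma γ_mul_γ_of_lt {i j : Fin N} (hlt : i < j) (h : i.val + j.val + 1 ≠ N) :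
    γ N q c j * γ N q c i = (-(q ^ 2)) • (γ N q c i * γ N q c j) := by
  have h0 := RingQuot.mkAlgHom_rel ℂ (Rel.swap (q := q) (c := c) i j hlt h)
  rwa [mkAlgHom_gen_mul_gen, map_smul, mkAlgHom_gen_mul_gen] at h0

lemma γ_dual_mul_γ (i : Fin N) (h : 2 * i.val + 1 < N) :
    γ N q c (dual i) * γ N q c i =
      -(γ N q c i * γ N q c (dual i)) + (q ^ 2 - q⁻¹ ^ 2) • clPairSum N q c i +
        (c ^ 2 * q ^ ((N : ℤ) - 2 * (i.val : ℤ) - 1) * (q + q⁻¹)) • 1 := by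
  have h0 := RingQuot.mkAlgHom_rel ℂ (Rel.pair (q := q) (c := c) i h)
  rwa [map_add, map_add, map_neg, map_smul, mkAlgHom_gen_mul_gen, mkAlgHom_gen_mul_gen,
    map_pairSum _ fun l => mkAlgHom_gen_mul_gen l _, AlgHom.commutes,
    Algebra.algebraMap_eq_smul_one] at h0

lemma γ_mul_self_of_middle (i : Fin N) (h : 2 * i.val + 1 = N) :
    γ N q c i * γ N q c i = (q - q⁻¹) • clPairSum N q c i + (c ^ 2) • 1 := by
  have h0 := RingQuot.mkAlgHom_rel ℂ (Rel.middle (q := q) (c := c) i h)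
  rwa [map_add, map_smul, mkAlgHom_gen_mul_gen, map_pairSum _ fun l => mkAlgHom_gen_mul_gen l _,
    AlgHom.commutes, Algebra.algebraMap_eq_smul_one] at h0

lemma exists_γ_mul_γ_eq_smul (hq : q ≠ 0) {i j : Fin N} (hne : i ≠ j)
    (h : i.val + j.val + 1 ≠ N) : ∃ u : ℂ, γ N q c i * γ N q c j = u • (γ N q c j * γ N q c i) := by
  rcases lt_or_gt_of_ne hne with hlt | hlt
  · refine ⟨(-(q ^ 2))⁻¹, ?_⟩
    rw [γ_mul_γ_of_lt hlt h, inv_smul_smul₀ (neg_ne_zero.mpr (pow_ne_zero 2 hq))]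
  · exact ⟨-(q ^ 2), γ_mul_γ_of_lt hlt (by omega)⟩

end Relations

section Rescale

variable {N : ℕ} {q c : ℂ}

lemma lift_smul_γ_rel (s : Fin N → ℂ) (hs : ∀ i, s i * s (dual i) = 1)
    ⦃x y : FreeAlgebra ℂ (Fin N)⦄ (h : Rel N q c x y) :
    FreeAlgebra.lift ℂ (fun j => s j • γ N q c j) x =
      FreeAlgebra.lift ℂ (fun j => s j • γ N q c j) y := by
  set F := FreeAlgebra.lift ℂ (fun j => s j • γ N q c j)
  have hF : ∀ i j, F (gen i * gen j) = (s i * s j) • (γ N q c i * γ N q c j) := fun i j => by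
    rw [map_mul, gen, gen, FreeAlgebra.lift_ι_apply, FreeAlgebra.lift_ι_apply, smul_mul_smul]
  have hFpair : ∀ l, F (gen l * gen (dual l)) = γ N q c l * γ N q c (dual l) := fun l => by
    rw [hF, hs, one_smul]
  cases h with
  | sq i hi => rw [hF, γ_mul_self i hi, smul_zero, map_zero]
  | swap i j hlt hne =>
    rw [hF, map_smul, hF, γ_mul_γ_of_lt hlt hne, smul_comm, mul_comm]
  | pair i hi =>
    rw [hF, mul_comm, hs, one_smul, map_add, map_add, map_neg, hFpair, map_smul,
      map_pairSum F hFpair, AlgHom.commutes, Algebra.algebraMap_eq_smul_one]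
    exact γ_dual_mul_γ i hi
  | middle i hi =>
    have hsi := hs i
    rw [dual_eq_self i hi] at hsi
    rw [hF, hsi, one_smul, map_add, map_smul, map_pairSum F hFpair, AlgHom.commutes,
      Algebra.algebraMap_eq_smul_one]
    exact γ_mul_self_of_middle i hi

variable (N q c) in
def rescale (s : Fin N → ℂ) (hs : ∀ i, s i * s (dual i) = 1) : Cl N q c →ₐ[ℂ] Cl N q c :=
  RingQuot.liftAlgHom ℂ ⟨FreeAlgebra.lift ℂ (fun j => s j • γ N q c j), lift_smul_γ_rel s hs⟩

lemma rescale_γ (s : Fin N → ℂ) (hs : ∀ i, s i * s (dual i) = 1) (j : Fin N) :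
    rescale N q c s hs (γ N q c j) = s j • γ N q c j := by
  rw [rescale, γ, RingQuot.liftAlgHom_mkAlgHom_apply, gen, FreeAlgebra.lift_ι_apply]
  rfl

variable (N) in
/-- The factors by which `DegZeroAt` rescales the generators. -/
def scaleFactor (k : Fin N) (t : ℂ) (j : Fin N) : ℂ :=
  if j.val = k.val then t else if j.val + k.val + 1 = N then t⁻¹ else 1

lemma scaleFactor_mul_dual {k : Fin N} (hk : 2 * k.val + 1 ≠ N) {t : ℂ} (ht : t ≠ 0) (i : Fin N) :
    scaleFactor N k t i * scaleFactor N k t (dual i) = 1 := by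
  have := i.2
  have := dual_val i
  unfold scaleFactor
  by_cases hi : i.val = k.val
  · rw [if_pos hi, if_neg (by omega), if_pos (by omega), mul_inv_cancel₀ ht]
  by_cases hi' : i.val + k.val + 1 = N
  · rw [if_neg hi, if_pos hi', if_pos (by omega), inv_mul_cancel₀ ht]
  · rw [if_neg hi, if_neg hi', if_neg (by omega), if_neg (by omega), one_mul]

end Rescale

section Anticommutator

variable {N : ℕ} {q c : ℂ}

variable (N q c) in
def dualAnticomm (i : Fin N) : Cl N q c :=
  γ N q c (dual i) * γ N q c i + γ N q c i * γ N q c (dual i)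

lemma dualAnticomm_eq (i : Fin N) (h : 2 * i.val + 1 < N) :
    dualAnticomm N q c i = (q ^ 2 - q⁻¹ ^ 2) • clPairSum N q c i +
      (c ^ 2 * q ^ ((N : ℤ) - 2 * (i.val : ℤ) - 1) * (q + q⁻¹)) • 1 := by
  rw [dualAnticomm, γ_dual_mul_γ i h]; abel

lemma commute_γ_γ_mul_γ_dual {j l : Fin N} (hlj : l.val < j.val)
    (hjl : j.val + l.val + 1 < N) : Commute (γ N q c j) (γ N q c l * γ N q c (dual l)) := by
  have h1 := γ_mul_γ_of_lt (q := q) (c := c) (show l < j from hlj) (by omega)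
  have h2 := γ_mul_γ_of_lt (q := q) (c := c) (show j < dual l by rw [Fin.lt_def, dual_val]; omega)
    (by rw [dual_val]; omega)
  unfold Commute SemiconjBy
  rw [← mul_assoc, h1, mul_assoc (γ N q c l), h2, smul_mul_assoc, mul_smul_comm, mul_assoc]

lemma commute_γ_clPairSum {i j : Fin N} (hij : i.val ≤ j.val)
    (hij' : i.val + j.val < N) : Commute (γ N q c j) (clPairSum N q c i) :=
  Commute.sum_right _ _ _ fun l hl => by
    have : l.val < i.val := Fin.lt_def.mp (Finset.mem_Iio.mp hl)
    exact (commute_γ_γ_mul_γ_dual (by omega) (by omega)).smul_right _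

lemma commute_γ_dualAnticomm {i j : Fin N} (hi : 2 * i.val + 1 < N)
    (hij : i.val ≤ j.val) (hij' : i.val + j.val < N) :
    Commute (γ N q c j) (dualAnticomm N q c i) := by
  rw [dualAnticomm_eq i hi]
  exact ((commute_γ_clPairSum hij hij').smul_right _).add_right
    ((Commute.one_right _).smul_right _)

lemma commute_γ_mul_γ_dual_dualAnticomm {i m : Fin N} (him : i.val ≤ m.val)
    (hm : 2 * m.val + 1 < N) :
    Commute (γ N q c m * γ N q c (dual m)) (dualAnticomm N q c i) := by
  have := dual_val m
  exact (commute_γ_dualAnticomm (by omega) him (by omega)).mul_left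
    (commute_γ_dualAnticomm (by omega) (by omega) (by omega))

lemma γ_mul_γ_dual_mul_self (l : Fin N) (hl : 2 * l.val + 1 < N) :
    (γ N q c l * γ N q c (dual l)) * (γ N q c l * γ N q c (dual l)) =
      dualAnticomm N q c l * (γ N q c l * γ N q c (dual l)) := by
  have hba : γ N q c (dual l) * γ N q c l =
      dualAnticomm N q c l - γ N q c l * γ N q c (dual l) := eq_sub_of_add_eq rfl
  have hD : Commute (γ N q c l) (dualAnticomm N q c l) :=
    commute_γ_dualAnticomm hl le_rfl (by omega)
  calc (γ N q c l * γ N q c (dual l)) * (γ N q c l * γ N q c (dual l))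
      = γ N q c l * (γ N q c (dual l) * γ N q c l) * γ N q c (dual l) := by
        simp only [mul_assoc]
    _ = γ N q c l * dualAnticomm N q c l * γ N q c (dual l) -
          (γ N q c l * γ N q c l) * (γ N q c (dual l) * γ N q c (dual l)) := by
        rw [hba]; simp only [mul_sub, sub_mul, mul_assoc]
    _ = dualAnticomm N q c l * (γ N q c l * γ N q c (dual l)) := by
        rw [γ_mul_self l (by omega), zero_mul, sub_zero, hD.eq, mul_assoc]

lemma clPairSum_zero (h : 0 < N) : clPairSum N q c ⟨0, h⟩ = 0 :=
  Finset.sum_eq_zero fun _ hl => absurd (Fin.lt_def.mp (Finset.mem_Iio.mp hl)) (Nat.not_lt_zero _)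

lemma clPairSum_succ (hq : q ≠ 0) (l : ℕ) (hl : l + 1 < N) :
    clPairSum N q c ⟨l + 1, hl⟩ = γ N q c ⟨l, by omega⟩ * γ N q c (dual ⟨l, by omega⟩) +
      q⁻¹ ^ 2 • clPairSum N q c ⟨l, by omega⟩ := by
  have hIio : Finset.Iio (⟨l + 1, hl⟩ : Fin N) =
      insert ⟨l, by omega⟩ (Finset.Iio ⟨l, by omega⟩) := by
    ext x; simp only [Finset.mem_insert, Finset.mem_Iio, Fin.lt_def, Fin.ext_iff]; omega
  rw [clPairSum, hIio, Finset.sum_insert (by simp), clPairSum, Finset.smul_sum]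
  congr 1
  · rw [show 2 * ((l : ℕ) : ℤ) - 2 * ((l + 1 : ℕ) : ℤ) + 2 = 0 by push_cast; ring, zpow_zero,
      one_smul]
  · refine Finset.sum_congr rfl fun m _ => ?_
    rw [smul_smul, ← zpow_natCast, ← zpow_neg_one, ← zpow_mul, ← zpow_add₀ hq]
    push_cast; ring_nf

lemma dualAnticomm_succ (hq : q ≠ 0) (l : ℕ) (hl : 2 * l + 3 < N) :
    dualAnticomm N q c ⟨l + 1, by omega⟩ = q⁻¹ ^ 2 • dualAnticomm N q c ⟨l, by omega⟩ +
      (q ^ 2 - q⁻¹ ^ 2) • (γ N q c ⟨l, by omega⟩ * γ N q c (dual ⟨l, by omega⟩)) := by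
  rw [dualAnticomm_eq _ (by simp; omega), dualAnticomm_eq _ (by simp; omega),
    clPairSum_succ hq l (by omega)]
  have hq' : q ^ ((N : ℤ) - 2 * ((l + 1 : ℕ) : ℤ) - 1) =
      q⁻¹ ^ 2 * q ^ ((N : ℤ) - 2 * (l : ℤ) - 1) := by
    rw [← zpow_natCast, ← zpow_neg_one, ← zpow_mul, ← zpow_add₀ hq]; push_cast; ring_nf
  simp only [hq']
  module

lemma isUnit_dualAnticomm (hq : q ≠ 0) (hc : c ≠ 0) (hqq : q + q⁻¹ ≠ 0) (i : Fin N)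
    (hi : 2 * i.val + 1 < N) : IsUnit (dualAnticomm N q c i) := by
  obtain ⟨l, hl⟩ := i
  induction l with
  | zero =>
    rw [dualAnticomm_eq _ hi, clPairSum_zero, smul_zero, zero_add,
      ← Algebra.algebraMap_eq_smul_one]
    exact (isUnit_iff_ne_zero.mpr (by simp [hc, hqq, zpow_ne_zero _ hq])).map _
  | succ l ih =>
    rw [dualAnticomm_succ hq l hi]
    exact isUnit_smul_add_smul_of_mul_self (ih (by omega) (by simp only at hi ⊢; omega))
      (commute_γ_mul_γ_dual_dualAnticomm le_rfl (by simp only at hi ⊢; omega))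
      (γ_mul_γ_dual_mul_self _ (by simp only at hi ⊢; omega)) (by simpa using hq)
      (by ring_nf; simpa using hq)

end Anticommutator

section Grading

variable {N : ℕ} {q c : ℂ}

variable (N q c) in
def word (L : List (Fin N)) : Cl N q c := (L.map (γ N q c)).prod

def wordDegree (k : Fin N) (L : List (Fin N)) : ℤ := L.count k - L.count (dual k)

variable (N q c) in
def homogeneousPart (k : Fin N) (d : ℤ) : Submodule ℂ (Cl N q c) :=
  Submodule.span ℂ (word N q c '' {L | wordDegree k L = d})

lemma span_range_word : Submodule.span ℂ (Set.range (word N q c)) = ⊤ := by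
  have hadjoin : Algebra.adjoin ℂ (Set.range (γ N q c)) = ⊤ := by
    rw [show Set.range (γ N q c) = RingQuot.mkAlgHom ℂ (Rel N q c) '' Set.range (FreeAlgebra.ι ℂ)
      by rw [← Set.range_comp]; rfl, ← AlgHom.map_adjoin, FreeAlgebra.adjoin_range_ι,
      Algebra.map_top, AlgHom.range_eq_top]
    exact RingQuot.mkAlgHom_surjective ℂ (Rel N q c)
  have hclosure : (Submonoid.closure (Set.range (γ N q c)) : Set (Cl N q c)) =
      Set.range (word N q c) := by
    rw [← FreeMonoid.mrange_lift, MonoidHom.coe_mrange,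
      ← FreeMonoid.toList.symm.surjective.range_comp]
    congr 1
    ext L
    simp [word, FreeMonoid.lift_apply]
  rw [← hclosure, ← Algebra.adjoin_eq_span, hadjoin, Algebra.top_toSubmodule]

lemma iSup_homogeneousPart (k : Fin N) : ⨆ d, homogeneousPart N q c k d = ⊤ := by
  rw [← span_range_word]
  simp only [homogeneousPart, ← Submodule.span_iUnion]
  congr 1
  ext x; simp

lemma prod_map_scaleFactor {k : Fin N} (hk : 2 * k.val + 1 ≠ N) {t : ℂ} (ht : t ≠ 0)
    (L : List (Fin N)) : (L.map (scaleFactor N k t)).prod = t ^ wordDegree k L := by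
  induction L with
  | nil => simp [wordDegree]
  | cons j L ih =>
    have := dual_val k
    have hkd := (dual_ne_self hk).symm
    rw [List.map_cons, List.prod_cons, ih, scaleFactor]
    by_cases hjk : j = k
    · subst hjk
      rw [if_pos rfl, wordDegree, wordDegree, List.count_cons_self, List.count_cons_of_ne hkd,
        ← zpow_one_add₀ ht]
      push_cast; ring_nf
    by_cases hjk' : j = dual k
    · subst hjk'
      rw [if_neg (by omega), if_pos (by omega), wordDegree, wordDegree, List.count_cons_self,
        List.count_cons_of_ne hkd.symm, ← zpow_neg_one, ← zpow_add₀ ht]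
      push_cast; ring_nf
    · rw [if_neg (fun h => hjk (Fin.ext h)), if_neg (fun h => hjk' (Fin.ext (by omega))), one_mul,
        wordDegree, wordDegree, List.count_cons_of_ne hjk, List.count_cons_of_ne hjk']

lemma map_eq_zpow_smul_of_mem_homogeneousPart {k : Fin N} (hk : 2 * k.val + 1 ≠ N) {t : ℂ}
    (ht : t ≠ 0) (f : Cl N q c →ₐ[ℂ] Cl N q c)
    (hf : ∀ j, f (γ N q c j) = scaleFactor N k t j • γ N q c j) {d : ℤ} {x : Cl N q c}
    (hx : x ∈ homogeneousPart N q c k d) : f x = t ^ d • x := by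
  induction hx using Submodule.span_induction with
  | mem x hx =>
    obtain ⟨L, hL, rfl⟩ := hx
    rw [word, f.map_prod_map_of_apply_eq_smul hf, prod_map_scaleFactor hk ht, hL.out]
  | zero => simp
  | add x y _ _ hx hy => rw [map_add, hx, hy, smul_add]
  | smul a x _ hx => rw [map_smul, hx, smul_comm]

lemma γ_mul_word_eq_zero (hq : q ≠ 0) {a : Fin N} (ha : 2 * a.val + 1 ≠ N) {L : List (Fin N)}
    (hL : L.count (dual a) < L.count a) : γ N q c a * word N q c L = 0 := by
  refine mul_prod_map_eq_zero_of_count_lt (K := ℂ) _ (γ_mul_self a ha) (fun j hja hjd => ?_) L hL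
  have := dual_val a
  exact exists_γ_mul_γ_eq_smul hq (Ne.symm hja) fun h => hjd (Fin.ext (by omega))

lemma mul_eq_zero_of_mem_homogeneousPart {a : Cl N q c} {k : Fin N} {d : ℤ}
    (h : ∀ L, wordDegree k L = d → a * word N q c L = 0) {x : Cl N q c}
    (hx : x ∈ homogeneousPart N q c k d) : a * x = 0 := by
  induction hx using Submodule.span_induction with
  | mem x hx => obtain ⟨L, hL, rfl⟩ := hx; exact h L hL
  | zero => rw [mul_zero]
  | add x y _ _ hx hy => rw [mul_add, hx, hy, add_zero]
  | smul a x _ hx => rw [mul_smul_comm, hx, smul_zero]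

end Grading

section Commutation

variable {N : ℕ} {q c : ℂ}

lemma γ_mem_homogeneousPart {k : Fin N} (hk : 2 * k.val + 1 ≠ N) :
    γ N q c k ∈ homogeneousPart N q c k 1 := by
  refine Submodule.subset_span ⟨[k], ?_, by simp [word]⟩
  simp [wordDegree, (dual_ne_self hk).symm]

lemma γ_dual_mem_homogeneousPart {k : Fin N} (hk : 2 * k.val + 1 ≠ N) :
    γ N q c (dual k) ∈ homogeneousPart N q c k (-1) := by
  refine Submodule.subset_span ⟨[dual k], ?_, by simp [word]⟩
  simp [wordDegree, dual_ne_self hk]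

/-- Rescaling by `t` multiplies the `d`-th component of the relation by `t ^ (d + e)`. -/
lemma component_mul_eq_smul_mul {k : Fin N} (hk : 2 * k.val + 1 ≠ N) (x : ℤ →₀ Cl N q c)
    (hx : ∀ d, x d ∈ homogeneousPart N q c k d) {e : ℤ} {y : Cl N q c}
    (hy : y ∈ homogeneousPart N q c k e) {μ : ℂ}
    (h : (x.sum fun _ v => v) * y = μ • (y * x.sum fun _ v => v)) (d : ℤ) :
    x d * y = μ • (y * x d) := by
  by_cases hd : d ∈ x.support
  swap
  · rw [Finsupp.notMem_support_iff.mp hd, zero_mul, mul_zero, smul_zero]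
  refine sub_eq_zero.mp (eq_zero_of_forall_sum_zpow_smul_eq_zero (K := ℂ) x.support
    (fun d => x d * y - μ • (y * x d)) (fun t ht => ?_) d hd)
  set σ := rescale N q c (scaleFactor N k t) (scaleFactor_mul_dual hk ht)
  have hσ {d : ℤ} {v : Cl N q c} (hv : v ∈ homogeneousPart N q c k d) : σ v = t ^ d • v :=
    map_eq_zpow_smul_of_mem_homogeneousPart hk ht σ (rescale_γ _ _) hv
  have h0 := congrArg σ (sub_eq_zero.mpr h)
  simp only [Finsupp.sum, Finset.sum_mul, Finset.mul_sum, Finset.smul_sum,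
    ← Finset.sum_sub_distrib, map_sum, map_sub, map_mul, map_smul, map_zero, hσ (hx _), hσ hy,
    smul_mul_smul] at h0
  refine (smul_eq_zero.mp (?_ : t ^ e • ∑ d ∈ x.support, t ^ d • (x d * y - μ • (y * x d)) = 0)
    ).resolve_left (zpow_ne_zero e ht)
  rw [← h0, Finset.smul_sum]
  refine Finset.sum_congr rfl fun d _ => ?_
  module

lemma eq_zero_of_mem_homogeneousPart (hq : q ≠ 0) (hc : c ≠ 0) (hqq : q + q⁻¹ ≠ 0) {k : Fin N}
    (hk : 2 * k.val + 1 < N) {d : ℤ} (hd : d ≠ 0) {x : Cl N q c}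
    (hx : x ∈ homogeneousPart N q c k d) {μ μ' : ℂ} (hμ : μ ≠ 0) (hμ' : μ' ≠ 0)
    (hxk : x * γ N q c k = μ • (γ N q c k * x))
    (hxk' : x * γ N q c (dual k) = μ' • (γ N q c (dual k) * x)) : x = 0 := by
  have hD : IsUnit (dualAnticomm N q c k) := isUnit_dualAnticomm hq hc hqq k hk
  have hk' : 2 * (dual k).val + 1 ≠ N := by rw [dual_val]; omega
  rcases hd.lt_or_gt with hneg | hpos
  · exact eq_zero_of_isUnit_mul_add_mul hD (mul_eq_zero_of_mem_homogeneousPart (fun L hL =>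
      γ_mul_word_eq_zero hq hk' (by rw [dual_dual]; unfold wordDegree at hL; omega)) hx) hμ hxk
  · rw [dualAnticomm, add_comm] at hD
    exact eq_zero_of_isUnit_mul_add_mul hD (mul_eq_zero_of_mem_homogeneousPart
      (fun L hL => γ_mul_word_eq_zero hq hk.ne (by unfold wordDegree at hL; omega)) hx) hμ' hxk'

end Commutation

theorem degZero_of_commutation_general (n ε : ℕ)
    (N : ℕ) (hNdef : N = 2 * n + ε) (q c : ℂ)
    (hq : q ≠ 0) (hqr : ∀ m : ℕ, 0 < m → q ^ m ≠ 1) (hc : c ≠ 0)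
    (k : Fin N) (hk : k.val < n) (μ μ' : ℂ) (hμ : μ ≠ 0) (hμ' : μ' ≠ 0)
    (z : Cl N q c)
    (hzk : z * γ N q c k = μ • (γ N q c k * z))
    (hzk' : z * γ N q c (dual k) = μ' • (γ N q c (dual k) * z)) :
    DegZeroAt N q c k.val z := by
  intro t ht f hf
  have hk2 : 2 * k.val + 1 < N := by omega
  have hqq : q + q⁻¹ ≠ 0 := fun h => hqr 4 (by norm_num) <| by
    have hsq : q ^ 2 = -1 := by linear_combination q * h - mul_inv_cancel₀ hq
    linear_combination (q ^ 2 - 1) * hsq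
  obtain ⟨x, hx, rfl⟩ := (Submodule.mem_iSup_iff_exists_finsupp _ z).mp
    ((iSup_homogeneousPart (q := q) (c := c) k).symm ▸ Submodule.mem_top)
  have hzero : ∀ d ≠ 0, x d = 0 := fun d hd =>
    eq_zero_of_mem_homogeneousPart hq hc hqq hk2 hd (hx d) hμ hμ'
      (component_mul_eq_smul_mul hk2.ne x hx (γ_mem_homogeneousPart hk2.ne) hzk d)
      (component_mul_eq_smul_mul hk2.ne x hx (γ_dual_mem_homogeneousPart hk2.ne) hzk' d)
  rw [Finsupp.sum_eq_single 0 (fun d _ hd => hzero d hd) (fun _ => rfl)]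
  simpa using map_eq_zpow_smul_of_mem_homogeneousPart hk2.ne ht f hf (hx 0)

/-- if `z ≠ 0` satisfies `zγ_k = μγ_k z` and `zγ_{k'} = μ'γ_{k'} z` with
`μ,μ' ≠ 0`, then `z` is homogeneous of `∂_k`-degree `0`. -/
theorem degZero_of_commutation (n ε : ℕ) (hn : 1 ≤ n) (hε : ε ≤ 1)
    (N : ℕ) (hNdef : N = 2 * n + ε) (hN : 3 ≤ N) (q c : ℂ)
    (hq : q ≠ 0) (hqr : ∀ m : ℕ, 0 < m → q ^ m ≠ 1) (hc : c ≠ 0)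
    (k : Fin N) (hk : k.val < n) (μ μ' : ℂ) (hμ : μ ≠ 0) (hμ' : μ' ≠ 0)
    (z : Cl N q c) (hz0 : z ≠ 0)
    (hzk : z * γ N q c k = μ • (γ N q c k * z))
    (hzk' : z * γ N q c (dual k) = μ' • (γ N q c (dual k) * z)) :
    DegZeroAt N q c k.val z :=
  degZero_of_commutation_general n ε N hNdef q c hq hqr hc k hk μ μ' hμ hμ' z hzk hzk'

end FRT
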